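/- Transitivity of independence: for B ⊆ C ⊆ E, A ⫝_B C and A ⫝_C E together hold if and only if A ⫝_B E, where A ⫝_B C means R[tp(ā,B)] = R[tp(ā, B∪C)] for every finite ā ∈ A. -/
import Mathlib



open FirstOrder FirstOrder.Language Set

universe u v

namespace DiagramRank

variable {L : FirstOrder.Language.{u, u}} {M : Type u} [L.Structure M]

/-- Formulas in variables indexed by `γ` with parameters from the monster model `M`. -/
abbrev Fml (L : FirstOrder.Language.{u, u}) (M : Type u) (γ : Type v) : Type _ :=
  L.Formula (M ⊕ γ)

/-- A tuple `c` realizes (in the monster model) every formula of the set `p`. -/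
def Realizes {γ : Type v} (c : γ → M) (p : Set (Fml L M γ)) : Prop :=
  ∀ φ ∈ p, φ.Realize (Sum.elim id c)

/-- The set of parameters from `M` occurring in the formula `φ`. -/
noncomputable def fmlParams {γ : Type v} (φ : Fml L M γ) : Set M :=
  letI := Classical.decEq (M ⊕ γ)
  {a : M | Sum.inl a ∈ φ.freeVarFinset}

/-- The domain of a set of formulas: all parameters occurring in it. -/
noncomputable def typeDom {γ : Type v} (p : Set (Fml L M γ)) : Set M :=
  ⋃ φ ∈ p, fmlParams φ

/-- The complete type of the tuple `c` over the set `A`. -/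
noncomputable def tp (A : Set M) {γ : Type v} (c : γ → M) : Set (Fml L M γ) :=
  {φ | fmlParams φ ⊆ A ∧ φ.Realize (Sum.elim id c)}

/-- The complete parameter-free type of a finite tuple (an element of the diagram `D(T)`). -/
def tp0 {m : ℕ} (c : Fin m → M) : Set (L.Formula (Fin m)) :=
  {φ | φ.Realize c}

/-- `A` is a `D`-set: the type over `∅` of every finite tuple from `A` belongs to `D`. -/
def IsDSet (D : ∀ m : ℕ, Set (Set (L.Formula (Fin m)))) (A : Set M) : Prop :=
  ∀ (m : ℕ) (c : Fin m → M), Set.range c ⊆ A → tp0 c ∈ D m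

/-- `p ∈ S_D(A)` : `p` is a complete type over `A` whose realizations together with `A`
form `D`-sets. -/
def InSD (D : ∀ m : ℕ, Set (Set (L.Formula (Fin m)))) (A : Set M) {n : ℕ}
    (p : Set (Fml L M (Fin n))) : Prop :=
  ∃ c : Fin n → M, p = tp A c ∧ IsDSet D (A ∪ Set.range c)

/-- Substitution of the parameters `a` for the last `m` variables of `φ`. -/
def substF {n m : ℕ} (φ : L.Formula (Fin (n + m))) (a : Fin m → M) : Fml L M (Fin n) :=
  φ.relabel fun i =>
    Sum.elim (fun j : Fin n => (Sum.inr j : M ⊕ Fin n)) (fun j : Fin m => Sum.inl (a j))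
      (finSumFinEquiv.symm i)

/-- Substitution of the parameters `a` for the last `m` variables of every formula of `q`. -/
def substT {n m : ℕ} (q : Set (L.Formula (Fin (n + m)))) (a : Fin m → M) :
    Set (Fml L M (Fin n)) :=
  (fun φ => substF φ a) '' q

theorem lt_of_succ_le' {β α : Ordinal.{u}} (h : β + 1 ≤ α) : β < α := by
  rwa [Ordinal.add_one_eq_succ, Order.succ_le_iff] at h

/-- `RankGE D A n α p` says `R_A[p] ≥ α` for a set of formulas `p` in `n` variables
(Shelah's rank for finite diagrams, Definition 2.1 of the paper), defined by induction on
the ordinal `α`:  `R_A[p] ≥ 0` iff `p` is realized in the monster model; for `α` a limit,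
`R_A[p] ≥ α` iff `R_A[p] ≥ β` for all `β < α`; and `R_A[p] ≥ β + 1` iff
(a) there is a formula `φ` with parameters in `A` with `R_A[p ∪ {φ}] ≥ β` and
`R_A[p ∪ {¬ φ}] ≥ β`, and (b) for every finite tuple `a` from `A` there is a type
`q(x,y) ∈ D` with `R_A[p ∪ q(x,a)] ≥ β`. -/
noncomputable def RankGE (D : ∀ m : ℕ, Set (Set (L.Formula (Fin m)))) (A : Set M) (n : ℕ) :
    Ordinal.{u} → Set (Fml L M (Fin n)) → Prop :=
  WellFounded.fix (C := fun _ : Ordinal.{u} => Set (Fml L M (Fin n)) → Prop)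
    (wellFounded_lt : WellFounded ((· < ·) : Ordinal.{u} → Ordinal.{u} → Prop))
    fun α ih p =>
      (∃ c : Fin n → M, Realizes c p) ∧
      ∀ β : Ordinal.{u}, ∀ h : β + 1 ≤ α,
        ((∃ φ : Fml L M (Fin n), fmlParams φ ⊆ A ∧
            ih β (lt_of_succ_le' h) (insert φ p) ∧
            ih β (lt_of_succ_le' h) (insert (BoundedFormula.not φ) p)) ∧
         ∀ (m : ℕ) (a : Fin m → M), Set.range a ⊆ A →
            ∃ q ∈ D (n + m), ih β (lt_of_succ_le' h) (p ∪ substT q a))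

/-- `R_A[p] ≥ α` for an arbitrary set of formulas `p` : by definition, the rank of `p` is
the minimum of the ranks of the subsets of `p` whose domain is finite. -/
noncomputable def RankGEg (D : ∀ m : ℕ, Set (Set (L.Formula (Fin m)))) (A : Set M) {n : ℕ}
    (α : Ordinal.{u}) (p : Set (Fml L M (Fin n))) : Prop :=
  ∀ q ⊆ p, (typeDom q).Finite → RankGE D A n α q

/-- `R_A[p] = R_A[q]` (as elements of `Ord ∪ {-1, ∞}`): the two ranks dominate the same
ordinals. -/
noncomputable def rankEqOn (D : ∀ m : ℕ, Set (Set (L.Formula (Fin m)))) (A : Set M) {n : ℕ}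
    (p q : Set (Fml L M (Fin n))) : Prop :=
  ∀ α : Ordinal.{u}, RankGEg D A α p ↔ RankGEg D A α q

/-- `R[p] = R[q]` where `R = R_𝔠` is the rank relative to the monster model. -/
noncomputable def rankEq (D : ∀ m : ℕ, Set (Set (L.Formula (Fin m)))) {n : ℕ}
    (p q : Set (Fml L M (Fin n))) : Prop :=
  rankEqOn D Set.univ p q

/-- `R[p] < R[q]` : some ordinal is dominated by the rank of `q` but not by that of `p`. -/
noncomputable def rankLt (D : ∀ m : ℕ, Set (Set (L.Formula (Fin m)))) {n n' : ℕ}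
    (p : Set (Fml L M (Fin n))) (q : Set (Fml L M (Fin n'))) : Prop :=
  ∃ α : Ordinal.{u}, RankGEg D Set.univ α q ∧ ¬ RankGEg D Set.univ α p

/-- `D` is totally transcendental : `R_A[p] < ∞` for every type over every subset of the
monster model. -/
noncomputable def TotTrans (D : ∀ m : ℕ, Set (Set (L.Formula (Fin m)))) (M : Type u)
    [L.Structure M] : Prop :=
  ∀ (A : Set M) (n : ℕ) (p : Set (Fml L M (Fin n))), ∃ α : Ordinal.{u}, ¬ RankGEg D A α p

/-- A subset `S` of the monster (typically an elementary submodel) is `(D, μ)`-homogeneous: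
it is a `D`-set realizing every `p ∈ S_D(A)` for every `A ⊆ S` with `|A| < μ`. -/
noncomputable def DHomogSet (D : ∀ m : ℕ, Set (Set (L.Formula (Fin m)))) (μ : Cardinal.{u})
    (S : Set M) : Prop :=
  IsDSet D S ∧ ∀ A : Set M, A ⊆ S → Cardinal.mk A < μ →
    ∀ p : Set (Fml L M (Fin 1)), InSD D A p →
      ∃ c : M, c ∈ S ∧ Realizes (fun _ : Fin 1 => c) p

/-- `p ∈ S_D(A)` is stationary : for every `B ⊇ A` there is a unique extension of `p` in
`S_D(B)` of the same rank `R = R_𝔠`. -/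
noncomputable def IsStationary (D : ∀ m : ℕ, Set (Set (L.Formula (Fin m)))) (A : Set M) {n : ℕ}
    (p : Set (Fml L M (Fin n))) : Prop :=
  InSD D A p ∧ ∀ B : Set M, A ⊆ B →
    ∃! q : Set (Fml L M (Fin n)), InSD D B q ∧ p ⊆ q ∧ rankEq D q p

/-- `p` splits over `B` (with `A` the ambient domain of `p`): there are a formula
`φ(x,y)` and tuples `a, c` from `A` with the same type over `B` such that `φ(x,a) ∈ p`
and `¬φ(x,c) ∈ p`. -/
noncomputable def Splits (A B : Set M) {n : ℕ} (p : Set (Fml L M (Fin n))) : Prop :=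
  ∃ (m : ℕ) (φ : L.Formula (Fin (n + m))) (a c : Fin m → M),
    Set.range a ⊆ A ∧ Set.range c ⊆ A ∧ tp (L := L) B a = tp B c ∧
    substF φ a ∈ p ∧ BoundedFormula.not (substF φ c) ∈ p

/-- `p` is big for the set `S` (a model): every finite-domain subset of `p` is realized
outside of `S`. -/
noncomputable def BigFor {n : ℕ} (p : Set (Fml L M (Fin n))) (S : Set M) : Prop :=
  ∀ q ⊆ p, (typeDom q).Finite →
    ∃ c : Fin n → M, Realizes c q ∧ ¬ Set.range c ⊆ S

/-- `p` is big : big for every (`D`-)model containing its parameters. -/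
noncomputable def Big (D : ∀ m : ℕ, Set (Set (L.Formula (Fin m)))) {n : ℕ}
    (p : Set (Fml L M (Fin n))) : Prop :=
  ∀ N : L.ElementarySubstructure M, IsDSet D (N : Set M) → typeDom p ⊆ (N : Set M) →
    BigFor p (N : Set M)

/-- The independence (nonforking) relation `A ⌣_B C` induced by the rank: the type of every
finite tuple of `A` over `B ∪ C` has the same rank as its restriction to `B`. -/
noncomputable def NFS (D : ∀ m : ℕ, Set (Set (L.Formula (Fin m)))) (A B C : Set M) : Prop :=
  ∀ (k : ℕ) (a : Fin k → M), Set.range a ⊆ A → rankEq D (tp B a) (tp (B ∪ C) a)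

/-- `p` (a stationary big type over `B`) is regular for the set `X`. -/
noncomputable def RegularFor (D : ∀ m : ℕ, Set (Set (L.Formula (Fin m)))) (B : Set M) {n : ℕ}
    (p : Set (Fml L M (Fin n))) (X : Set M) : Prop :=
  ∀ C : Set M, C ⊆ X → ∀ a b : Fin n → M, Set.range a ⊆ X → Set.range b ⊆ X →
    Realizes a p → Realizes b p →
    rankEq D (tp (B ∪ C) a) (tp B a) →
    ¬ rankEq D (tp (B ∪ C) b) (tp B b) →
    rankEq D (tp (B ∪ (C ∪ Set.range b)) a) (tp B a)

/-- `p` is regular : regular for the whole monster model. -/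
noncomputable def Regular (D : ∀ m : ℕ, Set (Set (L.Formula (Fin m)))) (B : Set M) {n : ℕ}
    (p : Set (Fml L M (Fin n))) : Prop :=
  RegularFor D B p Set.univ

/-- The family `c` of `n`-tuples is an indiscernible set over `A`. -/
noncomputable def IndiscSet {ι : Type v} (A : Set M) {n : ℕ} (c : ι → Fin n → M) : Prop :=
  ∀ (m : ℕ) (f g : Fin m → ι), Function.Injective f → Function.Injective g →
    tp (L := L) A (fun x : Fin m × Fin n => c (f x.1) x.2) =
      tp A (fun x : Fin m × Fin n => c (g x.1) x.2)

/-- `c` is a Morley sequence based on the stationary type `p ∈ S_D(A)` : each `c i`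
realizes the unique rank-preserving extension `p_{A_i}` of `p`, where
`A_i = A ∪ {c j : j < i}`. -/
noncomputable def MorleySeq {ι : Type v} [LinearOrder ι]
    (D : ∀ m : ℕ, Set (Set (L.Formula (Fin m)))) (A : Set M) {n : ℕ}
    (p : Set (Fml L M (Fin n))) (c : ι → Fin n → M) : Prop :=
  ∀ i : ι,
    IsDSet D ((A ∪ ⋃ j ∈ Set.Iio i, Set.range (c j)) ∪ Set.range (c i)) ∧
    p ⊆ tp (A ∪ ⋃ j ∈ Set.Iio i, Set.range (c j)) (c i) ∧
    rankEq D (tp (A ∪ ⋃ j ∈ Set.Iio i, Set.range (c j)) (c i)) p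

/-- The average type `Av_D(I, B)` of the family `c` over `B`: the formulas over `B`
satisfied by infinitely many members of the family. -/
noncomputable def AvgD {ι : Type v} {n : ℕ} (c : ι → Fin n → M) (B : Set M) :
    Set (Fml L M (Fin n)) :=
  {φ | fmlParams φ ⊆ B ∧ {i : ι | φ.Realize (Sum.elim id (c i))}.Infinite}

/-- `D` is stable in `lam` : at most `lam` complete `D`-types over any `D`-set of
cardinality at most `lam`. -/
noncomputable def StableIn (D : ∀ m : ℕ, Set (Set (L.Formula (Fin m)))) (M : Type u)
    [L.Structure M] (lam : Cardinal.{u}) : Prop :=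
  ∀ A : Set M, IsDSet D A → Cardinal.mk A ≤ lam →
    Cardinal.mk {p : Set (Fml L M (Fin 1)) // InSD D A p} ≤ lam

theorem RankGEg.anti (D : ∀ m : ℕ, Set (Set (L.Formula (Fin m)))) (A : Set M) {n : ℕ}
    {α : Ordinal.{u}} {p p' : Set (Fml L M (Fin n))} (hpp : p ⊆ p')
    (h : RankGEg D A α p') : RankGEg D A α p :=
  fun q hq hfin => h q (hq.trans hpp) hfin

theorem tp_mono {B C : Set M} (hBC : B ⊆ C) {γ : Type v} (a : γ → M) :
    tp (L := L) B a ⊆ tp C a :=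
  fun _ hφ => ⟨hφ.1.trans hBC, hφ.2⟩

theorem transitivity (D : ∀ m : ℕ, Set (Set (L.Formula (Fin m))))
    (hM : IsDSet D (Set.univ : Set M)) (hT : TotTrans (L := L) D M)
    (A B C E : Set M) (hBC : B ⊆ C) (hCE : C ⊆ E) :
    (NFS D A B C ∧ NFS D A C E) ↔ NFS D A B E := by
  have hBCeq : B ∪ C = C := Set.union_eq_self_of_subset_left hBC
  have hCEeq : C ∪ E = E := Set.union_eq_self_of_subset_left hCE
  have hBEeq : B ∪ E = E := Set.union_eq_self_of_subset_left (hBC.trans hCE)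
  constructor
  · rintro ⟨h1, h2⟩ k a ha α
    rw [hBEeq]
    have e1 := h1 k a ha α
    have e2 := h2 k a ha α
    rw [hBCeq] at e1
    rw [hCEeq] at e2
    exact e1.trans e2
  · intro h
    constructor
    · intro k a ha α
      rw [hBCeq]
      have hBE := h k a ha α
      rw [hBEeq] at hBE
      exact ⟨fun hB => RankGEg.anti D _ (tp_mono hCE a) (hBE.1 hB),
        fun hC => RankGEg.anti D _ (tp_mono hBC a) hC⟩
    · intro k a ha α
      rw [hCEeq]
      have hBE := h k a ha α
      rw [hBEeq] at hBE
      exact ⟨fun hC => hBE.1 (RankGEg.anti D _ (tp_mono hBC a) hC),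
        fun hE => RankGEg.anti D _ (tp_mono hCE a) hE⟩

end DiagramRank
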